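/- A bounded operator D on a complex Hilbert space is a derivation of the vector ternary product (D[ψ₁,ψ₂,ψ₃] = [Dψ₁,ψ₂,ψ₃] + [ψ₁,Dψ₂,ψ₃] + [ψ₁,ψ₂,Dψ₃] for all ψᵢ) if and only if D is anti-self-adjoint (D† = −D). -/

import Mathlib

noncomputable section

variable {H : Type*} [NormedAddCommGroup H] [InnerProductSpace ℂ H] [CompleteSpace H]

def otp (A B C : H →L[ℂ] H) : H →L[ℂ] H := A * (ContinuousLinearMap.adjoint B) * C

def commOp (X Y : H →L[ℂ] H) : H →L[ℂ] H := X * Y - Y * X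

def vtp {H : Type*} [NormedAddCommGroup H] [InnerProductSpace ℂ H] (a b c : H) : H :=
  (inner ℂ b c : ℂ) • a

/-
Expanding both sides, the terms in `D a` cancel, so `D` is a derivation of `vtp` exactly when
`⟪D b, c⟫ + ⟪b, D c⟫` vanishes for all `b, c`; by the defining property of the adjoint this says
`D† = -D`.
-/

section

variable {E : Type*} [NormedAddCommGroup E] [InnerProductSpace ℂ E]

theorem vtp_derivation_iff (D : E →ₗ[ℂ] E) (a b c : E) :
    D (vtp a b c) = vtp (D a) b c + vtp a (D b) c + vtp a b (D c) ↔
      (inner ℂ (D b) c + inner ℂ b (D c)) • a = 0 := by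
  simp only [vtp, map_smul, add_smul]
  constructor <;> intro h <;> linear_combination (norm := module) -h

theorem forall_vtp_derivation_iff [Nontrivial E] (D : E →ₗ[ℂ] E) :
    (∀ a b c : E, D (vtp a b c) = vtp (D a) b c + vtp a (D b) c + vtp a b (D c)) ↔
      ∀ b c : E, inner ℂ (D b) c + inner ℂ b (D c) = 0 := by
  obtain ⟨a, ha⟩ := exists_ne (0 : E)
  simp only [vtp_derivation_iff]
  exact ⟨fun h b c => (smul_eq_zero.mp (h a b c)).resolve_right ha,
    fun h _ b c => by rw [h b c, zero_smul]⟩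

theorem ContinuousLinearMap.adjoint_eq_neg_iff [CompleteSpace E] (D : E →L[ℂ] E) :
    ContinuousLinearMap.adjoint D = -D ↔ ∀ x y : E, inner ℂ (D x) y + inner ℂ x (D y) = 0 := by
  rw [eq_comm, ContinuousLinearMap.eq_adjoint_iff]
  simp only [neg_apply, inner_neg_left, neg_eq_iff_add_eq_zero]

end

theorem derivation_iff_antiselfadjoint [Nontrivial H] (D : H →L[ℂ] H) :
    (∀ ψ₁ ψ₂ ψ₃ : H, D (vtp ψ₁ ψ₂ ψ₃) =
        vtp (D ψ₁) ψ₂ ψ₃ + vtp ψ₁ (D ψ₂) ψ₃ + vtp ψ₁ ψ₂ (D ψ₃)) ↔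
      ContinuousLinearMap.adjoint D = -D := by
  rw [D.adjoint_eq_neg_iff]
  exact forall_vtp_derivation_iff (D : H →ₗ[ℂ] H)
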